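/- arXiv:2605.19243 — 2 statements merged into one kernel-verified Lean document; each statement's English description precedes it below -/
import Mathlib

section
/- Let B be a real N×N matrix and Q an orthogonal N×N matrix such that B Q is symmetric and trace(B Q) is maximal among orthogonal matrices Q' with B Q' symmetric. If B = L Σ Rᵀ is a singular value decomposition of B, then trace(B Q) = trace(Σ). -/
open Matrix

/-- If BQ is symmetric and trace(BQ) is maximal among orthogonal Q' with BQ'
symmetric, then trace(BQ) equals the sum of singular values. -/
theorem procrustes_stationary_trace (N : ℕ) (B Q L R S : Matrix (Fin N) (Fin N) ℝ)
    (hQ : Qᵀ * Q = 1)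
    (hsym : (B * Q)ᵀ = B * Q)
    (hmax : ∀ Q' : Matrix (Fin N) (Fin N) ℝ, Q'ᵀ * Q' = 1 → (B * Q')ᵀ = B * Q' →
      (B * Q').trace ≤ (B * Q).trace)
    (hL : Lᵀ * L = 1) (hL' : L * Lᵀ = 1)
    (hR : Rᵀ * R = 1) (hR' : R * Rᵀ = 1)
    (d : Fin N → ℝ) (hd : ∀ i, 0 ≤ d i) (hS : S = Matrix.diagonal d)
    (hsvd : B = L * S * Rᵀ) :
    (B * Q).trace = S.trace := by
  have hSsym : Sᵀ = S := by rw [hS, diagonal_transpose]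
  -- Lower bound: use Q' = R * Lᵀ
  have hQ'orth : (R * Lᵀ)ᵀ * (R * Lᵀ) = 1 := by
    rw [transpose_mul, transpose_transpose]
    calc L * Rᵀ * (R * Lᵀ) = L * (Rᵀ * R) * Lᵀ := by noncomm_ring
    _ = 1 := by rw [hR, mul_one, hL']
  have hBQ' : B * (R * Lᵀ) = L * S * Lᵀ := by
    rw [hsvd]
    calc L * S * Rᵀ * (R * Lᵀ) = L * S * (Rᵀ * R) * Lᵀ := by noncomm_ring
    _ = L * S * Lᵀ := by rw [hR, mul_one]
  have hQ'sym : (B * (R * Lᵀ))ᵀ = B * (R * Lᵀ) := by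
    rw [hBQ', transpose_mul, transpose_mul, transpose_transpose, hSsym, mul_assoc]
  have hlow : S.trace ≤ (B * Q).trace := by
    have := hmax (R * Lᵀ) hQ'orth hQ'sym
    rwa [hBQ', trace_mul_cycle, hL, one_mul] at this
  -- Upper bound
  set M := Rᵀ * Q * L with hM
  have hMorth : Mᵀ * M = 1 := by
    have h : Mᵀ * M = Lᵀ * (Qᵀ * ((R * Rᵀ) * Q)) * L := by
      rw [hM]; simp only [transpose_mul, transpose_transpose]; noncomm_ring
    rw [h, hR', one_mul, hQ, mul_one, hL]
  have hMdiag : ∀ i, M i i ≤ 1 := by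
    intro i
    have h1 : (Mᵀ * M) i i = 1 := by rw [hMorth]; simp
    have h2 : ∑ j, M j i * M j i = 1 := by
      rw [← h1]; simp [Matrix.mul_apply, transpose_apply]
    have h3 : M i i * M i i ≤ 1 := by
      rw [← h2]
      exact Finset.single_le_sum (f := fun j => M j i * M j i)
        (fun j _ => mul_self_nonneg _) (Finset.mem_univ i)
    nlinarith [h3]
  have htr : (B * Q).trace = (S * M).trace := by
    rw [hsvd, hM]
    calc (L * S * Rᵀ * Q).trace = (S * Rᵀ * Q * L).trace := by
          rw [show L * S * Rᵀ * Q = L * (S * Rᵀ * Q) by noncomm_ring, trace_mul_comm]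
    _ = (S * (Rᵀ * Q * L)).trace := by noncomm_ring
  have hup : (B * Q).trace ≤ S.trace := by
    rw [htr, hS]
    rw [Matrix.trace, Matrix.trace]
    apply Finset.sum_le_sum
    intro i _
    simp [Matrix.diag, Matrix.diagonal_mul]
    calc d i * M i i ≤ d i * 1 := mul_le_mul_of_nonneg_left (hMdiag i) (hd i)
    _ = d i := mul_one _
  linarith
end

section
/- Let C : [0,1] → O(N) be a differentiable curve of orthogonal matrices and suppose Cᵀ C' is expressed as (CᵀC')_{ij} = ∑_k v_k Θ^k_{ij} for fixed linearly independent vectors (playing the role of dφ) with coefficients Θ satisfying Θ^k_{ij} = Θ^i_{kj} (integrability) for all i,j,k. Then C' = 0, i.e., C is constant. -/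
/-!
Orthogonality makes `Cᵀ C'` skew-symmetric, and by linear independence of the `v k` this
skew-symmetry passes to each coefficient matrix `Θ k`. A tensor that is symmetric in its first
two indices and antisymmetric in its last two vanishes, so `Cᵀ C' = 0`, hence `C' = 0`.
-/

open Matrix

attribute [local instance] Matrix.normedAddCommGroup Matrix.normedSpace

section Derivative

variable {𝕜 : Type*} [NontriviallyNormedField 𝕜] [CompleteSpace 𝕜] {m n : Type*}
  [Fintype m] [Fintype n]

theorem HasDerivAt.matrix_transpose_mul_self {C : 𝕜 → Matrix m n 𝕜} {C' : Matrix m n 𝕜}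
    {t : 𝕜} (h : HasDerivAt C C' t) :
    HasDerivAt (fun s => (C s)ᵀ * C s) ((C t)ᵀ * C' + C'ᵀ * C t) t :=
  let B : Matrix m n 𝕜 →ₗ[𝕜] Matrix m n 𝕜 →ₗ[𝕜] Matrix n n 𝕜 :=
    (mulLinearMap 𝕜).comp (transposeLinearEquiv m n 𝕜 𝕜).toLinearMap
  B.toContinuousBilinearMap.hasDerivAt_of_bilinear (fun _ => h) (fun _ => h)

theorem transpose_transpose_mul_eq_neg_of_hasDerivAt {C : 𝕜 → Matrix m n 𝕜}
    {C' : Matrix m n 𝕜} {G : Matrix n n 𝕜} {t : 𝕜} (h : HasDerivAt C C' t)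
    (hG : ∀ s, (C s)ᵀ * C s = G) :
    ((C t)ᵀ * C')ᵀ = -((C t)ᵀ * C') := by
  have hconst : HasDerivAt (fun s => (C s)ᵀ * C s) 0 t := by
    rw [funext hG]
    exact hasDerivAt_const t G
  have hsum := h.matrix_transpose_mul_self.unique hconst
  rw [transpose_mul, transpose_transpose]
  exact eq_neg_of_add_eq_zero_right hsum

end Derivative

theorem coeff_antisymm_of_transpose_eq_neg {R X ι n : Type*} [CommRing R] [Fintype ι]
    {v : ι → X → R} (hv : LinearIndependent R v) {M : X → Matrix n n R} {Θ : ι → n → n → R}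
    (hrep : ∀ t i j, M t i j = ∑ k, v k t * Θ k i j) (hskew : ∀ t, (M t)ᵀ = -M t)
    (k : ι) (i j : n) : Θ k j i = -Θ k i j := by
  have hsum : ∑ l, (Θ l j i + Θ l i j) • v l = 0 := by
    funext t
    have hji : M t j i = -M t i j := congrFun (congrFun (hskew t) i) j
    rw [hrep, hrep, ← Finset.sum_neg_distrib, ← sub_eq_zero, ← Finset.sum_sub_distrib] at hji
    simpa only [Finset.sum_apply, Pi.smul_apply, Pi.zero_apply, smul_eq_mul, mul_add,
      sub_neg_eq_add, mul_comm] using hji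
  exact eq_neg_of_add_eq_zero_left (Fintype.linearIndependent_iff.mp hv _ hsum k)

theorem eq_zero_of_symm_of_antisymm {ι G : Type*} [AddGroup G] [IsAddTorsionFree G]
    {Θ : ι → ι → ι → G} (hsym : ∀ i j k, Θ k i j = Θ i k j)
    (hanti : ∀ k i j, Θ k j i = -Θ k i j) (k i j : ι) : Θ k i j = 0 :=
  self_eq_neg.mp <| calc
    Θ k i j = Θ i k j := hsym i j k
    _ = -Θ i j k := hanti i j k
    _ = -Θ j i k := by rw [hsym j k i]
    _ = Θ j k i := by rw [hanti j k i, neg_neg]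
    _ = Θ k j i := hsym k i j
    _ = -Θ k i j := hanti k i j

/-- A differentiable curve of orthogonal matrices whose logarithmic derivative
Cᵀ C' is expressed in a linearly independent family with coefficients Θ
satisfying the integrability symmetry Θ^k_{ij} = Θ^i_{kj} must be constant. -/
theorem constant_orthogonal_curve (N : ℕ)
    (C C' : ℝ → Matrix (Fin N) (Fin N) ℝ)
    (hder : ∀ t, HasDerivAt C (C' t) t)
    (horth : ∀ t, (C t)ᵀ * C t = 1)
    (v : Fin N → ℝ → ℝ) (hv : LinearIndependent ℝ v)
    (Θ : Fin N → Fin N → Fin N → ℝ)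
    (hrep : ∀ t i j, ((C t)ᵀ * C' t) i j = ∑ k, v k t * Θ k i j)
    (hsym : ∀ i j k, Θ k i j = Θ i k j) :
    (∀ t, C' t = 0) ∧ ∀ s t, C s = C t := by
  have hskew t := transpose_transpose_mul_eq_neg_of_hasDerivAt (hder t) horth
  have hΘ := eq_zero_of_symm_of_antisymm hsym (coeff_antisymm_of_transpose_eq_neg hv hrep hskew)
  have hM : ∀ t, (C t)ᵀ * C' t = 0 := fun t => by
    ext i j
    simp [hrep, hΘ]
  have hC' : ∀ t, C' t = 0 := fun t => by
    simpa [← Matrix.mul_assoc, mul_eq_one_comm.mp (horth t)] using congrArg (C t * ·) (hM t)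
  refine ⟨hC', fun s t => is_const_of_deriv_eq_zero (fun x => (hder x).differentiableAt) ?_ s t⟩
  exact fun x => by rw [(hder x).deriv, hC' x]
end
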